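/- Define T_n(x) as the coefficient of a^{n−1} in the elephant polynomial R_n viewed as a polynomial in a. Then T_1(x) = x and T_{n+1}(x) = ((x²−1)/n)·T_n'(x) for n ≥ 1; moreover T_n(x) = (−1)^{n−1} V_{n−1}(x)/(n−1)!, where V_0(x) = x and V_{n+1}(x) = (1−x²)·V_n'(x), so that V_n(tanh x) is the n-th derivative of tanh. -/

import Mathlib

open Polynomial

/-- The elephant polynomials as elements of `(ℝ[a])[x]`: the outer variable is `x`,
the inner variable is the parameter `a` (so `a` is `C X`), and the factor `a/n`
is the inner polynomial `(1/n) * X`. -/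
noncomputable def elephantR2 : ℕ → Polynomial (Polynomial ℝ)
  | 0 => 1
  | 1 => X
  | n + 2 => X * elephantR2 (n + 1) -
      C (Polynomial.C (((n : ℝ) + 1))⁻¹ * Polynomial.X) *
        ((1 - X ^ 2) * (elephantR2 (n + 1)).derivative)

/-- `elephantT n` is the coefficient of `a^(n-1)` in `R_n`, as a polynomial in `x`. -/
noncomputable def elephantT (n : ℕ) : Polynomial ℝ :=
  (elephantR2 n).sum fun i c => Polynomial.C (c.coeff (n - 1)) * Polynomial.X ^ i

/-- `V 0 = x`, `V (n+1) = (1 - x^2) * V n'`, so that `V n (tanh x) = tanh⁽ⁿ⁾(x)`. -/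
noncomputable def elephantV : ℕ → Polynomial ℝ
  | 0 => X
  | n + 1 => (1 - X ^ 2) * (elephantV n).derivative

/-! Taking the coefficient of `a ^ k` commutes with multiplication by polynomials in `x` alone and
with `∂ₓ`, while the factor `a / n` lowers `k` by one. As `R n` has degree `n - 1` in `a`, only the
term `(a / n) (1 - x²) ∂ₓ R n` contributes to the top coefficient of `R (n + 1)`, which gives the
recursion for `T`; it differs from the recursion for `V` by the factor `-1 / n`. -/

namespace Polynomial

variable {R : Type*}

section Semiring

variable [CommSemiring R]

/-- The coefficient of `a ^ k`, as a polynomial in `x`, of `p ∈ R[a][x]`. -/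
noncomputable def innerCoeff (k : ℕ) (p : R[X][X]) : R[X] :=
  p.sum fun i c => C (c.coeff k) * X ^ i

@[simp]
lemma coeff_innerCoeff (k : ℕ) (p : R[X][X]) (i : ℕ) :
    (innerCoeff k p).coeff i = (p.coeff i).coeff k := by
  simp only [innerCoeff, Polynomial.sum, finsetSum_coeff, coeff_C_mul_X_pow]
  rw [Finset.sum_ite_eq]
  split_ifs with h
  · rfl
  · simp [notMem_support_iff.mp h]

lemma innerCoeff_X_mul (k : ℕ) (p : R[X][X]) : innerCoeff k (X * p) = X * innerCoeff k p := by
  ext (_ | i) <;> simp [coeff_X_mul]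

lemma innerCoeff_C_C_mul_X_mul (k : ℕ) (c : R) (p : R[X][X]) :
    innerCoeff (k + 1) (C (C c * X) * p) = C c * innerCoeff k p := by
  ext i
  simp [mul_assoc, mul_comm X, coeff_mul_X]

lemma innerCoeff_map_C_mul (k : ℕ) (u : R[X]) (p : R[X][X]) :
    innerCoeff k (u.map C * p) = u * innerCoeff k p := by
  ext i
  rw [coeff_innerCoeff, coeff_mul, coeff_mul, finsetSum_coeff]
  simp only [coeff_map, coeff_C_mul, coeff_innerCoeff]

lemma innerCoeff_derivative (k : ℕ) (p : R[X][X]) :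
    innerCoeff k (derivative p) = derivative (innerCoeff k p) := by
  ext i
  rw [coeff_innerCoeff, coeff_derivative, coeff_derivative, coeff_innerCoeff,
    show ((i : R[X]) + 1) = C ((i : R) + 1) by simp, coeff_mul_C]

lemma innerCoeff_X (k : ℕ) : innerCoeff k (X : R[X][X]) = if k = 0 then X else 0 := by
  ext i
  rcases eq_or_ne 1 i with rfl | hi
  · split_ifs with hk <;> simp [hk, coeff_one]
  · split_ifs <;> simp [coeff_X, hi]

end Semiring

lemma innerCoeff_sub [CommRing R] (k : ℕ) (p q : R[X][X]) :
    innerCoeff k (p - q) = innerCoeff k p - innerCoeff k q := by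
  ext i
  simp

lemma innerCoeff_one_sub_X_sq_mul [CommRing R] (k : ℕ) (p : R[X][X]) :
    innerCoeff k ((1 - X ^ 2) * p) = (1 - X ^ 2) * innerCoeff k p := by
  rw [← innerCoeff_map_C_mul]
  simp

end Polynomial

lemma elephantR2_succ {n : ℕ} (hn : 1 ≤ n) :
    elephantR2 (n + 1) = X * elephantR2 n -
      C (Polynomial.C (n : ℝ)⁻¹ * X) * ((1 - X ^ 2) * derivative (elephantR2 n)) := by
  obtain ⟨m, rfl⟩ := Nat.exists_eq_add_of_le' hn
  rw [show m + 1 + 1 = m + 2 from rfl, elephantR2, Nat.cast_succ]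

lemma innerCoeff_succ_elephantR2_succ {n : ℕ} (hn : 1 ≤ n) (k : ℕ) :
    innerCoeff (k + 1) (elephantR2 (n + 1)) = X * innerCoeff (k + 1) (elephantR2 n) -
      Polynomial.C (n : ℝ)⁻¹ * ((1 - X ^ 2) * derivative (innerCoeff k (elephantR2 n))) := by
  rw [elephantR2_succ hn, innerCoeff_sub, innerCoeff_X_mul, innerCoeff_C_C_mul_X_mul,
    innerCoeff_one_sub_X_sq_mul, innerCoeff_derivative]

lemma innerCoeff_elephantR2_of_le {n k : ℕ} (hn : 1 ≤ n) (hk : n ≤ k) :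
    innerCoeff k (elephantR2 n) = 0 := by
  induction n, hn using Nat.le_induction generalizing k with
  | base => simp [elephantR2, innerCoeff_X, Nat.one_le_iff_ne_zero.mp hk]
  | succ n hn ih =>
    obtain ⟨k, rfl⟩ := Nat.exists_eq_add_of_le' (hn.trans (Nat.le_of_succ_le hk))
    rw [innerCoeff_succ_elephantR2_succ hn, ih (by omega), ih (by omega)]
    simp

lemma elephantT_eq_innerCoeff (n : ℕ) : elephantT n = innerCoeff (n - 1) (elephantR2 n) := rfl

lemma elephantT_one : elephantT 1 = X := by
  simp [elephantT_eq_innerCoeff, elephantR2, innerCoeff_X]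

lemma elephantT_succ {n : ℕ} (hn : 1 ≤ n) :
    elephantT (n + 1) = Polynomial.C (n : ℝ)⁻¹ * ((X ^ 2 - 1) * derivative (elephantT n)) := by
  obtain ⟨m, rfl⟩ := Nat.exists_eq_add_of_le' hn
  simp only [elephantT_eq_innerCoeff, Nat.add_sub_cancel]
  rw [innerCoeff_succ_elephantR2_succ hn, innerCoeff_elephantR2_of_le hn le_rfl]
  ring

lemma elephantT_eq_elephantV {n : ℕ} (hn : 1 ≤ n) :
    elephantT n = Polynomial.C ((-1 : ℝ) ^ (n - 1) / (n - 1).factorial) * elephantV (n - 1) := by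
  obtain ⟨m, rfl⟩ := Nat.exists_eq_add_of_le' hn
  rw [Nat.add_sub_cancel]
  induction m with
  | zero => simp [elephantT_one, elephantV]
  | succ m ih =>
    have hcoeff : (-1 : ℝ) ^ (m + 1) / (m + 1).factorial =
        -(((m + 1 : ℕ) : ℝ)⁻¹ * ((-1 : ℝ) ^ m / m.factorial)) := by
      rw [Nat.factorial_succ, pow_succ]
      push_cast
      field_simp
    rw [elephantT_succ (by omega), ih (by omega), derivative_C_mul, elephantV, hcoeff]
    simp only [map_neg, map_mul]
    ring

lemma Real.hasDerivAt_tanh (x : ℝ) : HasDerivAt Real.tanh (1 - Real.tanh x ^ 2) x := by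
  have hcosh : Real.cosh x ≠ 0 := (Real.cosh_pos x).ne'
  have h := (Real.hasDerivAt_sinh x).div (Real.hasDerivAt_cosh x) hcosh
  rw [show Real.sinh / Real.cosh = Real.tanh from
    funext fun y => (Real.tanh_eq_sinh_div_cosh y).symm] at h
  refine h.congr_deriv ?_
  rw [Real.tanh_eq_sinh_div_cosh]
  field_simp

lemma iteratedDeriv_tanh (n : ℕ) (x : ℝ) :
    iteratedDeriv n Real.tanh x = (elephantV n).eval (Real.tanh x) := by
  induction n generalizing x with
  | zero => simp [elephantV]
  | succ n ih =>
    have h := ((elephantV n).hasDerivAt (Real.tanh x)).comp x (Real.hasDerivAt_tanh x)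
    rw [iteratedDeriv_succ, funext ih]
    refine h.deriv.trans ?_
    simp [elephantV, mul_comm]

theorem stmt_19 :
    elephantT 1 = X ∧
    (∀ n : ℕ, 1 ≤ n →
      elephantT (n + 1) = Polynomial.C ((n : ℝ))⁻¹ * ((X ^ 2 - 1) * (elephantT n).derivative)) ∧
    (∀ n : ℕ, 1 ≤ n →
      elephantT n = Polynomial.C ((-1 : ℝ) ^ (n - 1) / (n - 1).factorial) * elephantV (n - 1)) ∧
    (∀ (n : ℕ) (x : ℝ), iteratedDeriv n Real.tanh x = (elephantV n).eval (Real.tanh x)) :=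
  ⟨elephantT_one, fun _ => elephantT_succ, fun _ => elephantT_eq_elephantV, iteratedDeriv_tanh⟩
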